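/- Let g : ℝ → ℝ be C¹ and a < ū < b. Then for all u₁, u₂ ∈ [a, ū] with u₁ < u₂, the increment of the derivative of the convex envelope on the smaller interval dominates that on the larger interval: (conv_{[a,ū]} g)'(u₂) − (conv_{[a,ū]} g)'(u₁) ≥ (conv_{[a,b]} g)'(u₂) − (conv_{[a,b]} g)'(u₁). (Derivatives at endpoints are one-sided.) -/

import Mathlib

open Set

/-- The convex envelope of `g` on the interval `[a,b]`: the pointwise supremum of all
convex functions on `[a,b]` lying below `g` on `[a,b]`. -/
noncomputable def convEnv (a b : ℝ) (g : ℝ → ℝ) : ℝ → ℝ :=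
  fun u => sSup {y : ℝ | ∃ h : ℝ → ℝ, ConvexOn ℝ (Set.Icc a b) h ∧
    (∀ x ∈ Set.Icc a b, h x ≤ g x) ∧ y = h u}

/-!
Everything rests on one principle: a convex function that lies below `g` wherever it exceeds
the envelope can be maxed with the envelope to give a convex minorant, so it lies below the
envelope.

Let `c` be the last point of `[a, u₂]` where the envelope on `[a, b]` touches `g` (it touches at
`a`). On `[a, c]` the two envelopes coincide: where the envelope on `[a, ū]` were larger, its
tangent line would beat the envelope on `[a, b]`. On `[c, u₂]` the envelope on `[a, b]` stays
below `g`, so it is affine: otherwise its secant, lowered until it touches `g`, would beat it at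
the point of contact. Hence the derivative on `[a, b]` is constant on `[c, u₂]` and agrees with
the derivative on `[a, ū]` on `[a, c]`, which is nondecreasing.
-/

lemma sub_mul_slope (f : ℝ → ℝ) (p u : ℝ) : (u - p) * slope f p u = f u - f p := by
  simpa using sub_smul_slope f p u

lemma convexOn_const_add_mul_sub {S : Set ℝ} (hS : Convex ℝ S) (k s x₀ : ℝ) :
    ConvexOn ℝ S fun u => k + s * (u - x₀) :=
  ⟨hS, fun x _ y _ p q _ _ hpq => le_of_eq <| by
    simp only [smul_eq_mul]; linear_combination (s * x₀ - k) * hpq⟩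

namespace ConvexOn

variable {S : Set ℝ} {f : ℝ → ℝ} {p q u : ℝ}

lemma le_secant (hf : ConvexOn ℝ S f) (hp : p ∈ S) (hq : q ∈ S) (hu : u ∈ Icc p q) :
    f u ≤ f p + slope f p q * (u - p) := by
  rcases hu.1.eq_or_lt with rfl | hpu
  · simp
  have hslope : slope f p u ≤ slope f p q :=
    hf.slope_mono hp ⟨hf.1.ordConnected.out hp hq hu, hpu.ne'⟩
      ⟨hq, (hpu.trans_le hu.2).ne'⟩ hu.2
  nlinarith [sub_mul_slope f p u]

lemma secant_le (hf : ConvexOn ℝ S f) (hp : p ∈ S) (hq : q ∈ S) (hu : u ∈ S) (hpq : p < q)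
    (hout : u ≤ p ∨ q ≤ u) : f p + slope f p q * (u - p) ≤ f u := by
  rcases eq_or_ne u p with rfl | hup
  · simp
  have hu' : u ∈ S \ {p} := ⟨hu, hup⟩
  have hq' : q ∈ S \ {p} := ⟨hq, hpq.ne'⟩
  rcases hout with hup' | hqu
  · have := hf.slope_mono hp hu' hq' (hup'.trans hpq.le)
    nlinarith [sub_mul_slope f p u]
  · have := hf.slope_mono hp hq' hu' hqu
    nlinarith [sub_mul_slope f p u]

variable {x m : ℝ}

lemma tangent_le_of_hasDerivWithinAt (hf : ConvexOn ℝ S f) (hx : x ∈ S) (hu : u ∈ S)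
    (hfx : HasDerivWithinAt f m S x) : f x + m * (u - x) ≤ f u := by
  rcases lt_trichotomy u x with hux | rfl | hxu
  · nlinarith [hf.slope_le_of_hasDerivWithinAt hu hx hux hfx, sub_mul_slope f u x]
  · simp
  · nlinarith [hf.le_slope_of_hasDerivWithinAt hx hu hxu hfx, sub_mul_slope f x u]

lemma monotoneOn_of_hasDerivWithinAt (hf : ConvexOn ℝ S f) {m : ℝ → ℝ}
    (hm : ∀ x ∈ S, HasDerivWithinAt f (m x) S x) : MonotoneOn m S := by
  intro x hx y hy hxy
  rcases hxy.eq_or_lt with rfl | hxy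
  · rfl
  exact (hf.le_slope_of_hasDerivWithinAt hx hy hxy (hm x hx)).trans
    (hf.slope_le_of_hasDerivWithinAt hx hy hxy (hm y hy))

end ConvexOn

lemma HasDerivWithinAt.eq_of_eqOn_Icc {f₁ f₂ : ℝ → ℝ} {s₁ s₂ : Set ℝ} {p q u m₁ m₂ : ℝ}
    (hpq : p < q) (hu : u ∈ Icc p q) (h₁ : HasDerivWithinAt f₁ m₁ s₁ u)
    (h₂ : HasDerivWithinAt f₂ m₂ s₂ u) (hs₁ : Icc p q ⊆ s₁) (hs₂ : Icc p q ⊆ s₂)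
    (heq : EqOn f₁ f₂ (Icc p q)) : m₁ = m₂ :=
  (uniqueDiffOn_Icc hpq u hu).eq_deriv _ (h₁.mono hs₁) ((h₂.mono hs₂).congr heq (heq hu))

lemma exists_last_eq {f g : ℝ → ℝ} {a q : ℝ} (haq : a ≤ q) (hf : ContinuousOn f (Icc a q))
    (hg : ContinuousOn g (Icc a q)) (ha : f a = g a) :
    ∃ c ∈ Icc a q, f c = g c ∧ ∀ v ∈ Ioc c q, f v ≠ g v := by
  set C := Icc a q ∩ (fun v => f v - g v) ⁻¹' {0}
  have hC : IsClosed C := (hf.sub hg).preimage_isClosed_of_isClosed isClosed_Icc isClosed_singleton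
  have hbdd : BddAbove C := bddAbove_Icc.mono inter_subset_left
  obtain ⟨hcI, hc⟩ := hC.csSup_mem ⟨a, left_mem_Icc.2 haq, by simp [ha]⟩ hbdd
  refine ⟨sSup C, hcI, sub_eq_zero.1 hc, fun v hv hfg => hv.1.not_ge ?_⟩
  exact le_csSup hbdd ⟨⟨hcI.1.trans hv.1.le, hv.2⟩, sub_eq_zero.2 hfg⟩

section convEnv

variable {g : ℝ → ℝ} {a b u : ℝ}

lemma le_convEnv {h : ℝ → ℝ} (hh : ConvexOn ℝ (Icc a b) h) (hhg : ∀ x ∈ Icc a b, h x ≤ g x)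
    (hu : u ∈ Icc a b) : h u ≤ convEnv a b g u :=
  le_csSup ⟨g u, by rintro _ ⟨h', -, hh'g, rfl⟩; exact hh'g u hu⟩ ⟨h, hh, hhg, rfl⟩

lemma convEnv_le_of_forall_le (hg : BddBelow (g '' Icc a b)) {y : ℝ}
    (H : ∀ h, ConvexOn ℝ (Icc a b) h → (∀ x ∈ Icc a b, h x ≤ g x) → h u ≤ y) :
    convEnv a b g u ≤ y := by
  obtain ⟨C, hC⟩ := hg
  refine csSup_le ⟨C, fun _ => C, convexOn_const C (convex_Icc a b),
    fun x hx => hC (mem_image_of_mem g hx), rfl⟩ ?_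
  rintro _ ⟨h, hh, hhg, rfl⟩
  exact H h hh hhg

lemma convEnv_le (hg : BddBelow (g '' Icc a b)) (hu : u ∈ Icc a b) : convEnv a b g u ≤ g u :=
  convEnv_le_of_forall_le hg fun _ _ hhg => hhg u hu

lemma convEnv_convexOn (hg : BddBelow (g '' Icc a b)) : ConvexOn ℝ (Icc a b) (convEnv a b g) := by
  refine ⟨convex_Icc a b, fun x hx y hy p q hp hq hpq => ?_⟩
  refine convEnv_le_of_forall_le hg fun h hh hhg => (hh.2 hx hy hp hq hpq).trans ?_
  simp only [smul_eq_mul]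
  gcongr
  · exact le_convEnv hh hhg hx
  · exact le_convEnv hh hhg hy

lemma convEnv_le_convEnv_of_le {e : ℝ} (hg : BddBelow (g '' Icc a b)) (heb : e ≤ b)
    (hu : u ∈ Icc a e) : convEnv a b g u ≤ convEnv a e g u := by
  have hsub : Icc a e ⊆ Icc a b := Icc_subset_Icc_right heb
  exact convEnv_le_of_forall_le hg fun h hh hhg =>
    le_convEnv (hh.subset hsub (convex_Icc a e)) (fun x hx => hhg x (hsub hx)) hu

lemma convEnv_apply_left {K : NNReal} (hg : LipschitzOnWith K g (Icc a b)) (hab : a ≤ b) :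
    convEnv a b g a = g a := by
  have ha : a ∈ Icc a b := left_mem_Icc.2 hab
  refine le_antisymm (convEnv_le (isCompact_Icc.bddBelow_image hg.continuousOn) ha) ?_
  have hline : ∀ x ∈ Icc a b, g a + -(K : ℝ) * (x - a) ≤ g x := by
    intro x hx
    have := hg.dist_le_mul a ha x hx
    rw [Real.dist_eq, Real.dist_eq, abs_sub_comm a, abs_of_nonneg (sub_nonneg.2 hx.1)] at this
    linarith [le_abs_self (g a - g x)]
  simpa using le_convEnv (convexOn_const_add_mul_sub (convex_Icc a b) _ _ _) hline ha

lemma le_convEnv_of_le_of_convEnv_lt (hg : BddBelow (g '' Icc a b)) {ψ : ℝ → ℝ}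
    (hψ : ConvexOn ℝ (Icc a b) ψ) (hψg : ∀ x ∈ Icc a b, convEnv a b g x < ψ x → ψ x ≤ g x)
    (hu : u ∈ Icc a b) : ψ u ≤ convEnv a b g u := by
  refine (le_max_right _ _).trans (le_convEnv ((convEnv_convexOn hg).sup hψ) (fun x hx => ?_) hu)
  refine max_le (convEnv_le hg hx) ?_
  by_cases hlt : convEnv a b g x < ψ x
  · exact hψg x hx hlt
  · exact (not_lt.1 hlt).trans (convEnv_le hg hx)


lemma convEnv_eq_secant_of_lt (hg : ContinuousOn g (Icc a b)) {p q : ℝ} (hap : a ≤ p)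
    (hpq : p < q) (hqb : q ≤ b) (hlt : ∀ x ∈ Ioo p q, convEnv a b g x < g x) :
    ∀ u ∈ Icc p q, convEnv a b g u = convEnv a b g p + slope (convEnv a b g) p q * (u - p) := by
  set F := convEnv a b g
  set s := slope F p q
  have hbdd := isCompact_Icc.bddBelow_image hg
  have hF := convEnv_convexOn hbdd
  have hsub : Icc p q ⊆ Icc a b := Icc_subset_Icc hap hqb
  have hp : p ∈ Icc a b := hsub (left_mem_Icc.2 hpq.le)
  have hq : q ∈ Icc a b := hsub (right_mem_Icc.2 hpq.le)
  have hFq : F p + s * (q - p) = F q := by linarith [sub_mul_slope F p q]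
  have key : ∀ t, 0 ≤ t → (∀ x ∈ Icc p q, F p - t + s * (x - p) ≤ g x) →
      ∀ x ∈ Icc a b, F p - t + s * (x - p) ≤ F x := by
    intro t ht htg x hx
    refine le_convEnv_of_le_of_convEnv_lt hbdd (convexOn_const_add_mul_sub (convex_Icc a b) _ _ _)
      (fun y hy hFy => htg y ⟨?_, ?_⟩) hx
    · by_contra! hyp
      linarith [hF.secant_le hp hq hy hpq (.inl hyp.le)]
    · by_contra! hqy
      linarith [hF.secant_le hp hq hy hpq (.inr hqy.le)]
  obtain ⟨y, hy, hymax⟩ := isCompact_Icc.exists_isMaxOn (nonempty_Icc.2 hpq.le)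
    ((by fun_prop : Continuous fun x => F p + s * (x - p)).continuousOn.sub (hg.mono hsub))
  have hmax : ∀ x ∈ Icc p q, F p + s * (x - p) - g x ≤ F p + s * (y - p) - g y :=
    fun x hx => hymax hx
  have hy0 : F p + s * (y - p) - g y ≤ 0 := by
    by_contra! hpos
    have hyp : y ≠ p := by rintro rfl; linarith [convEnv_le hbdd hp]
    have hyq : y ≠ q := by rintro rfl; linarith [convEnv_le hbdd hq]
    have := key _ hpos.le (fun x hx => by linarith [hmax x hx]) y (hsub hy)
    linarith [hlt y ⟨hy.1.lt_of_ne hyp.symm, hy.2.lt_of_ne hyq⟩]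
  intro u hu
  refine le_antisymm (hF.le_secant hp hq hu) ?_
  simpa using key 0 le_rfl (fun x hx => by linarith [hmax x hx]) u (hsub hu)

lemma convEnv_deriv_eq_of_lt (hg : ContinuousOn g (Icc a b)) {m : ℝ → ℝ}
    (hm : ∀ x ∈ Icc a b, HasDerivWithinAt (convEnv a b g) (m x) (Icc a b) x) {p q : ℝ}
    (hap : a ≤ p) (hpq : p ≤ q) (hqb : q ≤ b) (hlt : ∀ x ∈ Ioo p q, convEnv a b g x < g x) :
    ∀ u ∈ Icc p q, m u = m p := by
  rcases hpq.eq_or_lt with rfl | hpq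
  · intro u hu
    rw [le_antisymm hu.2 hu.1]
  have hsub : Icc p q ⊆ Icc a b := Icc_subset_Icc hap hqb
  set F := convEnv a b g
  set s := slope F p q
  have hline : ∀ x, HasDerivWithinAt (fun u => F p + s * (u - p)) s univ x := fun x => by
    rw [hasDerivWithinAt_univ]
    simpa using (((hasDerivAt_id x).sub_const p).const_mul s).const_add (F p)
  have hslope : ∀ u ∈ Icc p q, m u = s := fun u hu =>
    (hm u (hsub hu)).eq_of_eqOn_Icc hpq hu (hline u) hsub (subset_univ _)
      (convEnv_eq_secant_of_lt hg hap hpq hqb hlt)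
  intro u hu
  rw [hslope u hu, hslope p (left_mem_Icc.2 hpq.le)]

-- If `f x` exceeded the envelope, the tangent line of `f` at `x` would contradict
-- `le_convEnv_of_le_of_convEnv_lt`: beyond `e ≥ c` it stays below the envelope by convexity.
lemma le_convEnv_left_of_le_convEnv (hg : BddBelow (g '' Icc a b)) {e c x m : ℝ}
    {f : ℝ → ℝ} (hf : ConvexOn ℝ (Icc a e) f) (hfg : ∀ y ∈ Icc a e, f y ≤ g y) (heb : e ≤ b)
    (hax : a ≤ x) (hxc : x ≤ c) (hce : c ≤ e) (hfx : HasDerivWithinAt f m (Icc a e) x)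
    (hc : f c ≤ convEnv a b g c) : f x ≤ convEnv a b g x := by
  set F := convEnv a b g
  by_contra! hlt
  have hxc' : x < c := hxc.lt_of_ne (by rintro rfl; linarith)
  have hxI : x ∈ Icc a e := ⟨hax, hxc.trans hce⟩
  have hcI : c ∈ Icc a e := ⟨hax.trans hxc, hce⟩
  have hm : m ≤ (F c - F x) / (c - x) := by
    refine (hf.le_slope_of_hasDerivWithinAt hxI hcI hxc' hfx).trans ?_
    rw [slope_def_field]
    gcongr
  have hline : ∀ y ∈ Icc a b, F y < f x + m * (y - x) → f x + m * (y - x) ≤ g y := by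
    intro y hy hFy
    rcases le_or_gt y e with hye | hey
    · exact (hf.tangent_le_of_hasDerivWithinAt hxI ⟨hy.1, hye⟩ hfx).trans (hfg y ⟨hy.1, hye⟩)
    · have hcy : c < y := hce.trans_lt hey
      have hadj := (convEnv_convexOn hg).slope_mono_adjacent ⟨hax, hxc.trans (hce.trans heb)⟩ hy
        hxc' hcy
      have hmy : m * (y - c) ≤ F y - F c := by
        rw [← le_div_iff₀ (sub_pos.2 hcy)]
        exact hm.trans hadj
      have := hf.tangent_le_of_hasDerivWithinAt hxI hcI hfx
      linarith
  have := le_convEnv_of_le_of_convEnv_lt hg (convexOn_const_add_mul_sub (convex_Icc a b) _ _ _)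
    hline ⟨hax, hxc.trans (hce.trans heb)⟩
  simp only [sub_self, mul_zero, add_zero] at this
  linarith

lemma convEnv_eqOn_convEnv_of_eq (hg : BddBelow (g '' Icc a b)) {e c : ℝ} {m : ℝ → ℝ}
    (heb : e ≤ b) (hce : c ≤ e)
    (hm : ∀ x ∈ Icc a e, HasDerivWithinAt (convEnv a e g) (m x) (Icc a e) x)
    (hcg : convEnv a b g c = g c) : EqOn (convEnv a e g) (convEnv a b g) (Icc a c) := by
  have hge : BddBelow (g '' Icc a e) := hg.mono (image_mono (Icc_subset_Icc_right heb))
  intro x hx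
  have hxe : x ∈ Icc a e := ⟨hx.1, hx.2.trans hce⟩
  refine le_antisymm ?_ (convEnv_le_convEnv_of_le hg heb hxe)
  exact le_convEnv_left_of_le_convEnv hg (convEnv_convexOn hge) (fun y hy => convEnv_le hge hy)
    heb hx.1 hx.2 hce (hm x hxe) ((convEnv_le hge ⟨hx.1.trans hx.2, hce⟩).trans hcg.ge)

end convEnv

theorem stmt4 (g : ℝ → ℝ) (hg : ContDiff ℝ 1 g) (a ubar b : ℝ)
    (h1 : a < ubar) (h2 : ubar < b) (m₁ m₂ : ℝ → ℝ)
    (hm₁ : ∀ u ∈ Set.Icc a ubar,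
      HasDerivWithinAt (convEnv a ubar g) (m₁ u) (Set.Icc a ubar) u)
    (hm₂ : ∀ u ∈ Set.Icc a b,
      HasDerivWithinAt (convEnv a b g) (m₂ u) (Set.Icc a b) u) :
    ∀ u₁ ∈ Set.Icc a ubar, ∀ u₂ ∈ Set.Icc a ubar, u₁ < u₂ →
      m₂ u₂ - m₂ u₁ ≤ m₁ u₂ - m₁ u₁ := by
  intro u₁ hu₁ u₂ hu₂ h12
  have hgc : ContinuousOn g (Icc a b) := hg.continuous.continuousOn
  have hbdd : ∀ p q, BddBelow (g '' Icc p q) := fun p q =>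
    isCompact_Icc.bddBelow_image hg.continuous.continuousOn
  have hu₂b : u₂ ≤ b := hu₂.2.trans h2.le
  have hsub : Icc a u₂ ⊆ Icc a b := Icc_subset_Icc_right hu₂b
  have hF₂ : ContinuousOn (convEnv a b g) (Icc a b) := fun x hx => (hm₂ x hx).continuousWithinAt
  have hmono₁ := (convEnv_convexOn (hbdd a ubar)).monotoneOn_of_hasDerivWithinAt hm₁
  obtain ⟨K, hK⟩ := LocallyLipschitzOn.exists_lipschitzOnWith_of_compact isCompact_Icc
    (hg.locallyLipschitz.locallyLipschitzOn (s := Icc a b))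
  obtain ⟨c, hc, hcg, hne⟩ := exists_last_eq hu₂.1 (hF₂.mono hsub) (hgc.mono hsub)
    (convEnv_apply_left hK (h1.trans h2).le)
  have hm₂c : ∀ v ∈ Icc c u₂, m₂ v = m₂ c :=
    convEnv_deriv_eq_of_lt hgc hm₂ hc.1 hc.2 hu₂b fun v hv =>
      (convEnv_le (hbdd a b) (hsub ⟨hc.1.trans hv.1.le, hv.2.le⟩)).lt_of_ne (hne v ⟨hv.1, hv.2.le⟩)
  rcases le_or_gt c u₁ with hcu₁ | hu₁c
  · rw [hm₂c u₁ ⟨hcu₁, h12.le⟩, hm₂c u₂ ⟨hcu₁.trans h12.le, le_rfl⟩, sub_self, sub_nonneg]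
    exact hmono₁ hu₁ hu₂ h12.le
  have hac : a < c := hu₁.1.trans_lt hu₁c
  have hcu : c ≤ ubar := hc.2.trans hu₂.2
  have hagree : ∀ v ∈ Icc a c, m₁ v = m₂ v := fun v hv =>
    (hm₁ v ⟨hv.1, hv.2.trans hcu⟩).eq_of_eqOn_Icc hac hv (hm₂ v (hsub ⟨hv.1, hv.2.trans hc.2⟩))
      (Icc_subset_Icc_right hcu) (Icc_subset_Icc_right (hcu.trans h2.le))
      (convEnv_eqOn_convEnv_of_eq (hbdd a b) h2.le hcu hm₁ hcg)
  linarith [hagree u₁ ⟨hu₁.1, hu₁c.le⟩, hagree c ⟨hac.le, le_rfl⟩, hm₂c u₂ ⟨hc.2, le_rfl⟩,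
    hmono₁ ⟨hac.le, hcu⟩ hu₂ hc.2]
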